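/- Let C be a one-factor two-chain cover on [n] with associated non-hitting walks (V,W), viewed as polygonal paths in ℝ² by linear interpolation. Then the sum over all n elements of their incomparability windows equals the area between the curves V and W: Σ_{c∈[n]} I_C(c) = ∫_0^n (V_s − W_s) ds. -/

import Mathlib

open scoped Classical

/-- A two-chain cover on `[n]`: a (strict) partial order on `Fin n` whose ground set is
partitioned into two chains, `A` and its complement `B = Aᶜ`. -/
structure TwoChainCover (n : ℕ) where
  lt : Fin n → Fin n → Prop
  irrefl : ∀ x, ¬lt x x
  trans : ∀ x y z, lt x y → lt y z → lt x z
  A : Finset (Fin n)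
  chainA : ∀ x ∈ A, ∀ y ∈ A, x ≠ y → lt x y ∨ lt y x
  chainB : ∀ x y : Fin n, x ∉ A → y ∉ A → x ≠ y → lt x y ∨ lt y x

namespace TwoChainCover

variable {n : ℕ}

/-- The incomparability graph of a two-chain cover: `x ∼ y` iff `x ≠ y` and `x, y` are
incomparable in the partial order. -/
def incompGraph (C : TwoChainCover n) : SimpleGraph (Fin n) where
  Adj x y := x ≠ y ∧ ¬C.lt x y ∧ ¬C.lt y x
  symm := ⟨by intro x y h; exact ⟨h.1.symm, h.2.2, h.2.1⟩⟩
  loopless := ⟨by intro x h; exact h.1 rfl⟩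

/-- A two-chain cover has one factor if its incomparability graph is connected. -/
def OneFactor (C : TwoChainCover n) : Prop := C.incompGraph.Connected

/-- `(λ, δ)` is the greedy pair of linear orders of the cover `C`: both are linear
extensions of the partial order (here given as equivs `Fin n ≃ Fin n`, where `λ i` is the
element in position `i`, so that `λ.symm` records ranks), and every incomparable pair
`a ∈ A`, `b ∈ B` is resolved as `a` before `b` in `λ` and `b` before `a` in `δ`. -/
def GreedyPair (C : TwoChainCover n) (lam del : Fin n ≃ Fin n) : Prop :=
  (∀ x y, C.lt x y → lam.symm x < lam.symm y) ∧
  (∀ x y, C.lt x y → del.symm x < del.symm y) ∧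
  (∀ a ∈ C.A, ∀ b : Fin n, b ∉ C.A → ¬C.lt a b → ¬C.lt b a →
    lam.symm a < lam.symm b ∧ del.symm b < del.symm a)

/-- The walk associated with a linear order `e` (so `Γ(C) = (walk C λ, walk C δ)`): at
step `i + 1` the walk goes up if the element in position `i` lies in the chain `A`, and
down otherwise. -/
def walk (C : TwoChainCover n) (e : Fin n ≃ Fin n) : ℕ → ℤ := fun t =>
  ∑ i ∈ Finset.univ.filter (fun i : Fin n => (i : ℕ) < t),
    (if e i ∈ C.A then (1 : ℤ) else -1)

/-- The incomparability window of `c`: the number of elements incomparable to `c`. -/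
noncomputable def window (C : TwoChainCover n) (c : Fin n) : ℕ :=
  (Finset.univ.filter fun y : Fin n => y ≠ c ∧ ¬C.lt y c ∧ ¬C.lt c y).card

/-- `τ(c)`: the number of elements `y ⪯ c`. -/
noncomputable def tau (C : TwoChainCover n) (c : Fin n) : ℕ :=
  (Finset.univ.filter fun y : Fin n => C.lt y c ∨ y = c).card

/-- The rank of `a` within the chain `A` (so `a = a_i` with `i = rankA C a`). -/
noncomputable def rankA (C : TwoChainCover n) (a : Fin n) : ℕ :=
  (Finset.univ.filter fun y : Fin n => y ∈ C.A ∧ C.lt y a).card + 1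

/-- The rank of `b` within the chain `B = Aᶜ` (so `b = b_j` with `j = rankB C b`). -/
noncomputable def rankB (C : TwoChainCover n) (b : Fin n) : ℕ :=
  (Finset.univ.filter fun y : Fin n => y ∉ C.A ∧ C.lt y b).card + 1

/-- The first time the walk associated with `e` has taken `i` up-steps. -/
noncomputable def tUp (C : TwoChainCover n) (e : Fin n ≃ Fin n) (i : ℕ) : ℕ :=
  sInf {t : ℕ | i ≤ (Finset.univ.filter fun j : Fin n => (j : ℕ) < t ∧ e j ∈ C.A).card}

/-- The first time the walk associated with `e` has taken `j` down-steps. -/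
noncomputable def tDown (C : TwoChainCover n) (e : Fin n ≃ Fin n) (j : ℕ) : ℕ :=
  sInf {t : ℕ | j ≤ (Finset.univ.filter fun i : Fin n => (i : ℕ) < t ∧ e i ∉ C.A).card}

end TwoChainCover

/-- The piecewise-linear interpolation of an integer-valued walk, as a function on `ℝ`. -/
noncomputable def interp (f : ℕ → ℤ) (s : ℝ) : ℝ :=
  (f ⌊s⌋₊ : ℝ) + (s - (⌊s⌋₊ : ℝ)) * ((f (⌊s⌋₊ + 1) : ℝ) - (f ⌊s⌋₊ : ℝ))

/-! In a greedy pair every element `c` is placed, in one of the two linear extensions, right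
after the elements below it, and in the other one also after all `I_C(c)` elements incomparable
to it, since these lie in the opposite chain. Hence `I_C(c) = ±(δ⁻¹ c - λ⁻¹ c)`, the sign being
that of the step `c` contributes to the walks. Summing `V(t) - W(t)` over `t < n` counts each
element's step `n - 1 - position` times, which gives `∑ I_C(c)`. Finally the integral of the
polygonal path is the trapezoid sum, which equals `∑_{t < n} (V - W)(t)` because `V - W`
vanishes at `0` and at `n`. -/

section Interpolation

open MeasureTheory

variable (f : ℕ → ℤ)

lemma interp_eqOn_uIcc (t : ℕ) :
    Set.EqOn (interp f) (fun s => f t + (s - t) * (f (t + 1) - f t))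
      (Set.uIcc (t : ℝ) (t + 1)) := by
  intro s hs
  obtain ⟨hts, hst⟩ : (t : ℝ) ≤ s ∧ s ≤ t + 1 := by rwa [Set.uIcc_of_le (by linarith)] at hs
  rcases hst.eq_or_lt with rfl | hst
  · have hfloor : ⌊(t : ℝ) + 1⌋₊ = t + 1 := by exact_mod_cast Nat.floor_natCast (t + 1)
    simp only [interp, hfloor]
    push_cast
    ring
  · have hfloor : ⌊s⌋₊ = t :=
      (Nat.floor_eq_iff ((Nat.cast_nonneg t).trans hts)).2 ⟨hts, hst⟩
    simp only [interp, hfloor]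

lemma interp_sub (g : ℕ → ℤ) (s : ℝ) : interp f s - interp g s = interp (f - g) s := by
  simp only [interp, Pi.sub_apply, Int.cast_sub]
  ring

lemma intervalIntegrable_interp (t : ℕ) :
    IntervalIntegrable (interp f) volume (t : ℝ) (t + 1) :=
  ((by fun_prop : Continuous fun s : ℝ => (f t : ℝ) + (s - t) * (f (t + 1) - f t))
    |>.intervalIntegrable _ _).congr ((interp_eqOn_uIcc f t).symm.mono Set.uIoc_subset_uIcc)

lemma integral_interp_step (t : ℕ) :
    ∫ s in (t : ℝ)..t + 1, interp f s = (f t + f (t + 1)) / 2 := by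
  rw [intervalIntegral.integral_congr (interp_eqOn_uIcc f t), intervalIntegral.integral_add
    intervalIntegrable_const ((by fun_prop : Continuous fun s : ℝ =>
      (s - t) * (f (t + 1) - f t)).intervalIntegrable _ _)]
  simp only [intervalIntegral.integral_const, add_sub_cancel_left, smul_eq_mul, one_mul,
    intervalIntegral.integral_mul_const, intervalIntegral.intervalIntegrable_id,
    intervalIntegrable_const, intervalIntegral.integral_sub, integral_id]
  ring

lemma integral_interp (n : ℕ) :
    ∫ s in (0 : ℝ)..n, interp f s = ∑ t ∈ Finset.range n, ((f t : ℝ) + f (t + 1)) / 2 := by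
  rw [← Nat.cast_zero, ← intervalIntegral.sum_integral_adjacent_intervals
    (a := fun t : ℕ => (t : ℝ)) fun t _ => by simpa using intervalIntegrable_interp f t]
  refine Finset.sum_congr rfl fun t _ => ?_
  simpa using integral_interp_step f t

lemma integral_interp_of_eq {n : ℕ} (hf : f n = f 0) :
    ∫ s in (0 : ℝ)..n, interp f s = ∑ t ∈ Finset.range n, (f t : ℝ) := by
  have hshift : ∑ t ∈ Finset.range n, (f (t + 1) : ℝ) = ∑ t ∈ Finset.range n, (f t : ℝ) := by
    have h := Finset.sum_range_succ' (fun t => (f t : ℝ)) n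
    rw [Finset.sum_range_succ, hf] at h
    linarith
  rw [integral_interp, ← Finset.sum_div, Finset.sum_add_distrib, hshift]
  ring

end Interpolation

namespace TwoChainCover

variable {n : ℕ} (C : TwoChainCover n)

lemma card_filter_symm_lt (e : Fin n ≃ Fin n) (c : Fin n) :
    (Finset.univ.filter fun x => e.symm x < e.symm c).card = e.symm c := by
  rw [Finset.card_equiv e.symm (t := Finset.Iio (e.symm c)) (by simp), Fin.card_Iio]

lemma mem_A_iff_of_incomp {x c : Fin n} (hxc : C.incompGraph.Adj x c) :
    x ∈ C.A ↔ c ∉ C.A := by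
  obtain ⟨hne, hxc, hcx⟩ := hxc
  constructor
  · intro hx hc
    exact (C.chainA x hx c hc hne).elim hxc hcx
  · intro hc
    by_contra hx
    exact (C.chainB x c hx hc hne).elim hxc hcx

lemma symm_eq_card_lt_of_precedes_incomp {e : Fin n ≃ Fin n}
    (hext : ∀ x y, C.lt x y → e.symm x < e.symm y) (c : Fin n)
    (hinc : ∀ x, C.incompGraph.Adj x c → e.symm c < e.symm x) :
    (e.symm c : ℕ) = (Finset.univ.filter fun x => C.lt x c).card := by
  rw [← card_filter_symm_lt e c]
  congr 1
  ext x
  simp only [Finset.mem_filter, Finset.mem_univ, true_and]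
  refine ⟨fun hx => ?_, hext x c⟩
  by_contra hxc
  rcases eq_or_ne x c with rfl | hne
  · exact lt_irrefl _ hx
  by_cases hcx : C.lt c x
  · exact (hext c x hcx).asymm hx
  · exact (hinc x ⟨hne, hxc, hcx⟩).asymm hx

lemma symm_eq_card_lt_add_window_of_incomp_precede {e : Fin n ≃ Fin n}
    (hext : ∀ x y, C.lt x y → e.symm x < e.symm y) (c : Fin n)
    (hinc : ∀ x, C.incompGraph.Adj x c → e.symm x < e.symm c) :
    (e.symm c : ℕ) = (Finset.univ.filter fun x => C.lt x c).card + C.window c := by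
  rw [← card_filter_symm_lt e c, window, ← Finset.card_union_of_disjoint
    (Finset.disjoint_filter.2 fun x _ hxc hx => hx.2.1 hxc), ← Finset.filter_or]
  congr 1
  ext x
  simp only [Finset.mem_filter, Finset.mem_univ, true_and]
  constructor
  · intro hx
    by_cases hxc : C.lt x c
    · exact Or.inl hxc
    · refine Or.inr ⟨?_, hxc, fun hcx => (hext c x hcx).asymm hx⟩
      rintro rfl
      exact lt_irrefl _ hx
  · rintro (hxc | hxc)
    · exact hext x c hxc
    · exact hinc x hxc

lemma window_eq_symm_sub_mul (lam del : Fin n ≃ Fin n) (hg : C.GreedyPair lam del) (c : Fin n) :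
    (C.window c : ℤ) =
      (((del.symm c : ℕ) : ℤ) - (lam.symm c : ℕ)) * if c ∈ C.A then 1 else -1 := by
  obtain ⟨hlam, hdel, hres⟩ := hg
  by_cases hc : c ∈ C.A
  · have hB : ∀ x, C.incompGraph.Adj x c → x ∉ C.A := fun x hx hxA =>
      (C.mem_A_iff_of_incomp hx).1 hxA hc
    have hl := C.symm_eq_card_lt_of_precedes_incomp hlam c fun x hx =>
      (hres c hc x (hB x hx) hx.2.2 hx.2.1).1
    have hd := C.symm_eq_card_lt_add_window_of_incomp_precede hdel c fun x hx =>
      (hres c hc x (hB x hx) hx.2.2 hx.2.1).2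
    rw [if_pos hc]
    omega
  · have hA : ∀ x, C.incompGraph.Adj x c → x ∈ C.A := fun x hx =>
      (C.mem_A_iff_of_incomp hx).2 hc
    have hl := C.symm_eq_card_lt_add_window_of_incomp_precede hlam c fun x hx =>
      (hres x (hA x hx) c hc hx.2.1 hx.2.2).1
    have hd := C.symm_eq_card_lt_of_precedes_incomp hdel c fun x hx =>
      (hres x (hA x hx) c hc hx.2.1 hx.2.2).2
    rw [if_neg hc]
    omega

lemma walk_zero (e : Fin n ≃ Fin n) : C.walk e 0 = 0 := by
  simp [walk]

lemma walk_end (e : Fin n ≃ Fin n) :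
    C.walk e n = ∑ x, if x ∈ C.A then (1 : ℤ) else -1 := by
  simp only [walk, Fin.is_lt, Finset.filter_true]
  exact e.sum_comp fun x => if x ∈ C.A then (1 : ℤ) else -1

lemma sum_range_walk (e : Fin n ≃ Fin n) :
    ∑ t ∈ Finset.range n, C.walk e t =
      ∑ x, ((n : ℤ) - (e.symm x : ℕ) - 1) * if x ∈ C.A then 1 else -1 := by
  calc ∑ t ∈ Finset.range n, C.walk e t
      = ∑ i : Fin n, ∑ t ∈ Finset.range n,
          if (i : ℕ) < t then (if e i ∈ C.A then (1 : ℤ) else -1) else 0 := by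
        simp only [walk, Finset.sum_filter]
        exact Finset.sum_comm
    _ = ∑ i : Fin n, ((n : ℤ) - (i : ℕ) - 1) * if e i ∈ C.A then 1 else -1 := by
        refine Finset.sum_congr rfl fun i _ => ?_
        have hIoo : (Finset.range n).filter (fun t => (i : ℕ) < t) = Finset.Ioo (i : ℕ) n := by
          ext t
          simp only [Finset.mem_filter, Finset.mem_range, Finset.mem_Ioo]
          omega
        rw [← Finset.sum_filter, Finset.sum_const, hIoo, Nat.card_Ioo, nsmul_eq_mul]
        congr 1
        have := i.is_lt
        omega
    _ = _ := Fintype.sum_equiv e _ _ fun i => by simp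

lemma sum_window_eq_sum_walk_sub (lam del : Fin n ≃ Fin n) (hg : C.GreedyPair lam del) :
    ∑ c, (C.window c : ℤ) = ∑ t ∈ Finset.range n, (C.walk lam t - C.walk del t) := by
  rw [Finset.sum_sub_distrib, sum_range_walk, sum_range_walk, ← Finset.sum_sub_distrib]
  refine Finset.sum_congr rfl fun c _ => ?_
  rw [C.window_eq_symm_sub_mul lam del hg c]
  ring

end TwoChainCover

open TwoChainCover in
theorem sum_window_eq_area_general (n : ℕ) (C : TwoChainCover n)
    (lam del : Fin n ≃ Fin n) (hg : C.GreedyPair lam del) :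
    ((∑ c : Fin n, C.window c : ℕ) : ℝ) =
      ∫ s in (0 : ℝ)..(n : ℝ), (interp (C.walk lam) s - interp (C.walk del) s) := by
  have hends : (C.walk lam - C.walk del) n = (C.walk lam - C.walk del) 0 := by
    simp only [Pi.sub_apply, walk_end, walk_zero, sub_self]
  simp_rw [interp_sub, integral_interp_of_eq _ hends, Pi.sub_apply]
  exact_mod_cast C.sum_window_eq_sum_walk_sub lam del hg

open TwoChainCover in
/-- Let `C` be a one-factor two-chain cover on `[n]` with greedy pair `(λ, δ)` and
associated non-hitting walks `(V, W)`, viewed as polygonal paths via linear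
interpolation.  Then the sum of the incomparability windows of all `n` elements equals
the area between the two curves: `∑_{c ∈ [n]} I_C(c) = ∫_0^n (V_s - W_s) ds`. -/
theorem sum_window_eq_area (n : ℕ) (C : TwoChainCover n)
    (lam del : Fin n ≃ Fin n) (h1 : C.OneFactor) (hg : C.GreedyPair lam del) :
    ((∑ c : Fin n, C.window c : ℕ) : ℝ) =
      ∫ s in (0 : ℝ)..(n : ℝ), (interp (C.walk lam) s - interp (C.walk del) s) :=
  sum_window_eq_area_general n C lam del hg
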